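/- Let D be a directed network on node set N. Every contested intermediary i has middleman power zero: if i is an intermediary contested by some node set C ⊆ N \ {i}, then ν_i(D) = 0 (equivalently, its brokerage b_i(D) = 0). -/

import Mathlib

open Finset

variable {V : Type*} [Fintype V] [DecidableEq V]

/-- The arc set is irreflexive: no loops. -/
def IrreflArcs (D : Finset (V × V)) : Prop := ∀ i : V, (i, i) ∉ D

/-- `l` is an `(i,j)`-path in `D`: a list of pairwise distinct nodes, of length at
least 2, starting at `i`, ending at `j`, consecutive nodes joined by arcs of `D`. -/
def IsPath (D : Finset (V × V)) (i j : V) (l : List V) : Prop :=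
  l.Nodup ∧ l.Chain' (fun a b => (a, b) ∈ D) ∧
    l.head? = some i ∧ l.getLast? = some j ∧ 2 ≤ l.length

/-- Node `i` is connected to node `j`: there is at least one `(i,j)`-path. -/
def Conn (D : Finset (V × V)) (i j : V) : Prop := ∃ l : List V, IsPath D i j l

/-- The direct successors `s_i(D)`. -/
def dsucc (D : Finset (V × V)) (i : V) : Finset V := univ.filter fun j => (i, j) ∈ D

/-- The direct predecessors `p_i(D)`. -/
def dpred (D : Finset (V × V)) (i : V) : Finset V := univ.filter fun j => (j, i) ∈ D

open scoped Classical in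
/-- The successor set `S_i(D)`: all nodes to which `i` is connected. -/
noncomputable def succC (D : Finset (V × V)) (i : V) : Finset V :=
  univ.filter fun j => Conn D i j

open scoped Classical in
/-- The predecessor set `P_i(D)`: all nodes that are connected to `i`. -/
noncomputable def predC (D : Finset (V × V)) (i : V) : Finset V :=
  univ.filter fun j => Conn D j i

/-- An intermediary: at least one direct predecessor, at least one direct successor,
and at least two distinct direct neighbours. -/
def Intermediary (D : Finset (V × V)) (i : V) : Prop :=
  (dpred D i).Nonempty ∧ (dsucc D i).Nonempty ∧ 2 ≤ (dsucc D i ∪ dpred D i).card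

/-- The induced subnetwork `D_M` on a node set `M`. -/
def inducedOn (D : Finset (V × V)) (M : Finset V) : Finset (V × V) :=
  D.filter fun e => e.1 ∈ M ∧ e.2 ∈ M

/-- The reduced network `D − i`. -/
def removeNode (D : Finset (V × V)) (i : V) : Finset (V × V) :=
  D.filter fun e => e.1 ≠ i ∧ e.2 ≠ i

/-- The reduced network `D − C`, removing a node set `C`. -/
def removeNodes (D : Finset (V × V)) (C : Finset V) : Finset (V × V) :=
  D.filter fun e => e.1 ∉ C ∧ e.2 ∉ C

/-- `h` is an `(i,j)`-middleman: `i ≠ j`, `h ∉ {i,j}`, there is at least one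
`(i,j)`-path, and `h` lies on every `(i,j)`-path. -/
def MmBetween (D : Finset (V × V)) (h i j : V) : Prop :=
  i ≠ j ∧ h ≠ i ∧ h ≠ j ∧ Conn D i j ∧ ∀ l : List V, IsPath D i j l → h ∈ l

/-- `h` is a middleman: an intermediary that is an `(i,j)`-middleman for some pair. -/
def IsMiddleman (D : Finset (V × V)) (h : V) : Prop :=
  Intermediary D h ∧ ∃ i j : V, MmBetween D h i j

/-- The network is weakly connected. -/
def WeakConn (D : Finset (V × V)) : Prop :=
  ∀ i j : V, i ≠ j → Conn D i j ∨ Conn D j i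

/-- The network `(M, D_M)` is weakly connected. -/
def WeakConnOn (D : Finset (V × V)) (M : Finset V) : Prop :=
  ∀ i ∈ M, ∀ j ∈ M, i ≠ j → Conn (inducedOn D M) i j ∨ Conn (inducedOn D M) j i

/-- The network is strongly connected. -/
def StrongConn (D : Finset (V × V)) : Prop :=
  ∀ i j : V, i ≠ j → Conn D i j

/-- `M` is a component of `D`. -/
def IsComponent (D : Finset (V × V)) (M : Finset V) : Prop :=
  WeakConnOn D M ∧ ∀ i ∉ M, ¬ WeakConnOn D (insert i M)

/-- The coverage `Γ_i(D)` of an intermediary `i`. -/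
noncomputable def coverage (D : Finset (V × V)) (i : V) : Finset (V × V) :=
  (predC D i ×ˢ succC D i).filter fun e => e.1 ≠ e.2

/-- The extended coverage `Γ̄_j(D)` of a node `j`. -/
noncomputable def extCoverage (D : Finset (V × V)) (j : V) : Finset (V × V) :=
  insert j (predC D j) ×ˢ insert j (succC D j)

/-- Intermediary `i` is contested by the node set `C ⊆ N \ {i}`. -/
def ContestedBy (D : Finset (V × V)) (i : V) (C : Finset V) : Prop :=
  i ∉ C ∧ coverage D i ⊆ C.biUnion fun j => extCoverage (removeNode D i) j

/-- The brokerage `b_i(D)`. -/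
noncomputable def brokerage (D : Finset (V × V)) (i : V) : ℤ :=
  (∑ j ∈ univ.erase i,
      (((succC D j).card : ℤ) - ((succC (removeNode D i) j).card : ℤ)))
    - ((predC D i).card : ℤ)

/-- The maximal potential brokerage `B(D)`. -/
noncomputable def maxBrokerage (D : Finset (V × V)) : ℤ :=
  ∑ i : V, (((succC D i).card : ℤ) - ((dsucc D i).card : ℤ))

/-- The middleman power measure `ν_i(D) = b_i(D) / max{B(D), 1}`. -/
noncomputable def power (D : Finset (V × V)) (i : V) : ℚ :=
  (brokerage D i : ℚ) / ((max (maxBrokerage D) 1 : ℤ) : ℚ)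

/-- The robustness `ρ_i(D)` of a middleman `i`. -/
noncomputable def robustness (D : Finset (V × V)) (i : V) : ℕ :=
  sInf {m : ℕ | ∃ D' : Finset (V × V),
      IrreflArcs D' ∧ D ⊂ D' ∧ ¬ IsMiddleman D' i ∧ D'.card = m} - D.card

/-- The dual robustness `ρ*_i(D)` of a middleman `i`. -/
noncomputable def dualRobustness (D : Finset (V × V)) (i : V) : ℕ :=
  D.card - sSup {m : ℕ | ∃ D' : Finset (V × V),
      D' ⊆ D ∧ ¬ IsMiddleman D' i ∧ D'.card = m}

/-- The node-robustness `ψ_i(D)` of a middleman `i`. -/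
noncomputable def nodeRobustness (D : Finset (V × V)) (i : V) : ℕ :=
  sInf {m : ℕ | ∃ C : Finset V,
      i ∉ C ∧ ¬ IsMiddleman (removeNodes D C) i ∧ C.card = m}

/-- Direct neighbours in the underlying undirected network. -/
def nbr (D : Finset (V × V)) (i : V) : Finset V := dsucc D i ∪ dpred D i

/-- The local clustering coefficient `C_i = 2 L_i / (d_i (d_i − 1))`, computed here as
the number of ordered adjacent pairs of neighbours divided by `d_i (d_i − 1)`. -/
def clustering (D : Finset (V × V)) (i : V) : ℚ :=
  (((nbr D i ×ˢ nbr D i).filter fun e =>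
      e.1 ≠ e.2 ∧ ((e.1, e.2) ∈ D ∨ (e.2, e.1) ∈ D)).card : ℚ)
    / (((nbr D i).card : ℚ) * (((nbr D i).card : ℚ) - 1))

/-! If `i` is contested, deleting it destroys no connection between two other nodes: a path
from `h` to `k` through `i` puts `(h, k)` into the coverage of `i`, hence into the extended
coverage `Γ̄_j(D − i)` of some `j ∈ C`, which yields an `(h, k)`-path avoiding `i`. So for
`j ≠ i` the reach of `j` in `D − i` is its reach in `D` minus `i`: each predecessor of `i`
loses exactly one successor and no other node loses any, so the sum in `b_i(D)` is `#P_i(D)`. -/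

open Relation

theorem List.exists_nodup_isChain_of_reflTransGen {α : Type*} {r : α → α → Prop} {a b : α}
    (h : ReflTransGen r a b) :
    ∃ l : List α, l.Nodup ∧ l.IsChain r ∧ l.head? = some a ∧ l.getLast? = some b := by
  induction h using ReflTransGen.head_induction_on with
  | refl => exact ⟨[b], List.nodup_singleton b, List.isChain_singleton b, rfl, rfl⟩
  | @head a c hac _ ih =>
    obtain ⟨l, hnd, hch, hhd, hlast⟩ := ih
    obtain ⟨t, rfl⟩ : ∃ t, l = c :: t := ⟨l.tail, List.eq_cons_of_mem_head? hhd⟩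
    by_cases ha : a ∈ c :: t
    · -- shortcut the cycle through `a`
      obtain ⟨s, u, hsu⟩ := List.append_of_mem ha
      refine ⟨a :: u, ?_, ?_, rfl, ?_⟩
      · exact hnd.sublist (hsu ▸ List.sublist_append_right s _)
      · exact hch.suffix (hsu ▸ List.suffix_append s _)
      · rw [← hlast, hsu, List.getLast?_append_of_ne_nil _ (List.cons_ne_nil a u)]
    · refine ⟨a :: c :: t, List.nodup_cons.mpr ⟨ha, hnd⟩, hch.cons_cons hac, rfl, ?_⟩
      rwa [List.getLast?_cons_cons]

theorem Relation.TransGen.avoiding_or_through {α : Type*} {r : α → α → Prop} {a b : α}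
    (i : α) (h : TransGen r a b) :
    TransGen (fun x y => r x y ∧ x ≠ i ∧ y ≠ i) a b ∨
      (ReflTransGen r a i ∧ ReflTransGen r i b) := by
  induction h with
  | @single c hac =>
    by_cases ha : a = i
    · exact .inr ⟨ha ▸ .refl, ha ▸ .single hac⟩
    by_cases hc : c = i
    · exact .inr ⟨hc ▸ .single hac, hc ▸ .refl⟩
    exact .inl (.single ⟨hac, ha, hc⟩)
  | @tail b c hab hbc ih =>
    rcases ih with ih | ⟨hai, hib⟩
    · by_cases hb : b = i
      · have hai := (TransGen.mono (fun _ _ h => h.1) _ _ ih).to_reflTransGen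
        exact .inr ⟨hb ▸ hai, hb ▸ .single hbc⟩
      by_cases hc : c = i
      · exact .inr ⟨hc ▸ hab.to_reflTransGen.tail hbc, hc ▸ .refl⟩
      exact .inl (ih.tail ⟨hbc, hb, hc⟩)
    · exact .inr ⟨hai, hib.tail hbc⟩

def Arc (D : Finset (V × V)) (a b : V) : Prop := (a, b) ∈ D

omit [Fintype V] [DecidableEq V] in
theorem IsPath.ne {D : Finset (V × V)} {i j : V} {l : List V} (h : IsPath D i j l) : i ≠ j := by
  obtain ⟨hnd, -, hhd, hlast, hlen⟩ := h
  match l, hnd, hhd, hlast, hlen with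
  | a :: b :: t, hnd, hhd, hlast, _ =>
    rw [List.head?_cons, Option.some_inj] at hhd
    rw [List.getLast?_cons_cons, List.getLast?_eq_some_iff] at hlast
    obtain ⟨s, hs⟩ := hlast
    rintro rfl
    exact (List.nodup_cons.mp hnd).1 (hhd ▸ hs ▸ by simp)

omit [Fintype V] [DecidableEq V] in
theorem Conn.ne {D : Finset (V × V)} {i j : V} (h : Conn D i j) : i ≠ j :=
  let ⟨_, hl⟩ := h
  hl.ne

omit [Fintype V] [DecidableEq V] in
theorem Conn.mono {D D' : Finset (V × V)} (hD : D ⊆ D') {i j : V} (h : Conn D i j) :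
    Conn D' i j := by
  obtain ⟨l, hnd, hch, hl⟩ := h
  exact ⟨l, hnd, List.IsChain.imp (fun _ _ hab => hD hab) hch, hl⟩

omit [Fintype V] [DecidableEq V] in
theorem conn_iff_transGen {D : Finset (V × V)} {i j : V} :
    Conn D i j ↔ i ≠ j ∧ TransGen (Arc D) i j := by
  constructor
  · rintro ⟨l, hl⟩
    refine ⟨hl.ne, (reflTransGen_iff_eq_or_transGen.mp ?_).resolve_left hl.ne.symm⟩
    obtain ⟨hnd, hch, hhd, hlast, hlen⟩ := hl
    have hne : l ≠ [] := List.ne_nil_of_length_pos (by omega)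
    rw [List.head?_eq_some_head hne, Option.some_inj] at hhd
    rw [List.getLast?_eq_some_getLast hne, Option.some_inj] at hlast
    exact hhd ▸ hlast ▸ List.relationReflTransGen_of_exists_isChain l hch hne
  · rintro ⟨hij, h⟩
    obtain ⟨l, hnd, hch, hhd, hlast⟩ :=
      List.exists_nodup_isChain_of_reflTransGen h.to_reflTransGen
    refine ⟨l, hnd, hch, hhd, hlast, ?_⟩
    match l, hhd, hlast with
    | [a], hhd, hlast => simp_all
    | _ :: _ :: _, _, _ => simp

omit [Fintype V] [DecidableEq V] in
theorem eq_or_conn_iff_reflTransGen {D : Finset (V × V)} {i j : V} :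
    i = j ∨ Conn D i j ↔ ReflTransGen (Arc D) i j := by
  rw [reflTransGen_iff_eq_or_transGen, conn_iff_transGen, eq_comm (a := j)]
  by_cases hij : i = j <;> simp [hij]

omit [DecidableEq V] in
theorem mem_succC {D : Finset (V × V)} {j k : V} : k ∈ succC D j ↔ Conn D j k := by
  simp [succC]

omit [DecidableEq V] in
theorem mem_predC {D : Finset (V × V)} {h j : V} : h ∈ predC D j ↔ Conn D h j := by
  simp [predC]

theorem mem_insert_succC {D : Finset (V × V)} {j k : V} :
    k ∈ insert j (succC D j) ↔ ReflTransGen (Arc D) j k := by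
  rw [Finset.mem_insert, mem_succC, eq_comm, eq_or_conn_iff_reflTransGen]

theorem mem_insert_predC {D : Finset (V × V)} {h j : V} :
    h ∈ insert j (predC D j) ↔ ReflTransGen (Arc D) h j := by
  rw [Finset.mem_insert, mem_predC, eq_or_conn_iff_reflTransGen]

omit [Fintype V] in
theorem arc_removeNode {D : Finset (V × V)} {i a b : V} :
    Arc (removeNode D i) a b ↔ Arc D a b ∧ a ≠ i ∧ b ≠ i :=
  Finset.mem_filter

omit [Fintype V] in
theorem not_conn_removeNode_self {D : Finset (V × V)} {h i : V} :
    ¬ Conn (removeNode D i) h i := by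
  rw [conn_iff_transGen]
  rintro ⟨-, hhi⟩
  obtain ⟨b, -, hbi⟩ := TransGen.tail'_iff.mp hhi
  exact (arc_removeNode.mp hbi).2.2 rfl

section Contested

variable {D : Finset (V × V)} {i : V} {C : Finset V}

theorem ContestedBy.conn_removeNode (hC : ContestedBy D i C) {h k : V} (hh : h ≠ i) (hk : k ≠ i)
    (hhk : Conn D h k) : Conn (removeNode D i) h k := by
  obtain ⟨hne, hhk⟩ := conn_iff_transGen.mp hhk
  rcases hhk.avoiding_or_through i with havoid | ⟨hhi, hik⟩
  · exact conn_iff_transGen.mpr ⟨hne, TransGen.mono (fun _ _ => arc_removeNode.mpr) _ _ havoid⟩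
  have hcov : (h, k) ∈ coverage D i := by
    simp only [coverage, mem_filter, mem_product, mem_predC, mem_succC]
    refine ⟨⟨?_, ?_⟩, hne⟩
    · exact (eq_or_conn_iff_reflTransGen.mpr hhi).resolve_left hh
    · exact (eq_or_conn_iff_reflTransGen.mpr hik).resolve_left hk.symm
  obtain ⟨j, -, hhj, hjk⟩ : ∃ j ∈ C, h ∈ insert j (predC (removeNode D i) j) ∧
      k ∈ insert j (succC (removeNode D i) j) := by
    simpa [extCoverage] using hC.2 hcov
  exact (eq_or_conn_iff_reflTransGen.mpr
    ((mem_insert_predC.mp hhj).trans (mem_insert_succC.mp hjk))).resolve_left hne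

theorem ContestedBy.succC_removeNode (hC : ContestedBy D i C) {j : V} (hj : j ≠ i) :
    succC (removeNode D i) j = (succC D j).erase i := by
  ext k
  rw [mem_erase, mem_succC, mem_succC]
  constructor
  · intro hjk
    exact ⟨fun hki => not_conn_removeNode_self (hki ▸ hjk), hjk.mono (filter_subset _ _)⟩
  · rintro ⟨hki, hjk⟩
    exact hC.conn_removeNode hj hki hjk

theorem ContestedBy.brokerage_eq_zero (hC : ContestedBy D i C) : brokerage D i = 0 := by
  have hterm : ∀ j ∈ univ.erase i,
      ((succC D j).card : ℤ) - (succC (removeNode D i) j).card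
        = if j ∈ predC D i then 1 else 0 := by
    intro j hj
    rw [hC.succC_removeNode (ne_of_mem_erase hj)]
    split_ifs with hji <;> rw [mem_predC, ← mem_succC] at hji
    · rw [← card_erase_add_one hji]
      push_cast
      ring
    · rw [erase_eq_of_notMem hji, sub_self]
  have hpred : predC D i ⊆ univ.erase i := fun j hj =>
    mem_erase.mpr ⟨(mem_predC.mp hj).ne, mem_univ j⟩
  rw [brokerage, sum_congr rfl hterm, sum_ite_mem, inter_eq_right.mpr hpred, sum_const,
    nsmul_one, sub_self]

end Contested

theorem statement12_general {V : Type*} [Fintype V] [DecidableEq V] (D : Finset (V × V))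
    (i : V)
    (C : Finset V) (hC : ContestedBy D i C) :
    power D i = 0 ∧ brokerage D i = 0 := by
  have hb := hC.brokerage_eq_zero
  exact ⟨by rw [power, hb, Int.cast_zero, zero_div], hb⟩

/-- Every contested intermediary `i` has middleman power zero (equivalently, its
brokerage is zero). -/
theorem statement12 {V : Type*} [Fintype V] [DecidableEq V] (D : Finset (V × V))
    (hirr : IrreflArcs D) (i : V) (hi : Intermediary D i)
    (C : Finset V) (hC : ContestedBy D i C) :
    power D i = 0 ∧ brokerage D i = 0 :=
  statement12_general D i C hC
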